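/- arXiv:1911.08860 — 2 statements merged into one kernel-verified Lean document; each statement's English description precedes it below -/
import Mathlib

section
/- In the setting of a cumulative Lie group B-spline with velocity recursion ω^{(j)} = Ad_{A_{j-1}^{-1}} ω^{(j-1)} + λ̇_{j-1} d_{j-1} and ω^{(1)} = 0, the quantity X(u)^{-1} Ẋ(u) equals (ω^{(k)})_∧ and hence lies in the Lie algebra of L. -/
open NormedSpace

attribute [local instance] Matrix.linftyOpNormedRing Matrix.linftyOpNormedAlgebra

/-!
Let `P_m` be the product of the first `m` factors. Its left-trivialized derivative
`P_m⁻¹ P_m'` obeys the Leibniz rule `(P A)⁻¹ (P A)' = A⁻¹ (P⁻¹ P') A + A⁻¹ A'`, and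
`A_j⁻¹ A_j' = λ_j' d_j^∧` because `exp (λ d^∧)` commutes with `d^∧`. This is exactly the recursion
defining `ω`, so by induction `P_{k-1}⁻¹ P_{k-1}' = ω^{(k)}_∧`; the constant factor `X_i` does not
change the left-trivialized derivative.
-/

section LeftTrivializedDerivative

variable {𝕜 : Type*} [NontriviallyNormedField 𝕜] {𝔸 : Type*} [NormedRing 𝔸] [NormedAlgebra 𝕜 𝔸]
  {u : 𝕜}

theorem HasDerivAt.exp_smul_const {𝕂 : Type*} [RCLike 𝕂] [NormedAlgebra 𝕂 𝔸] [CompleteSpace 𝔸]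
    {f : 𝕂 → 𝕂} {f' t : 𝕂} (hf : HasDerivAt f f' t) (x : 𝔸) :
    HasDerivAt (fun s => NormedSpace.exp (f s • x)) (NormedSpace.exp (f t • x) * (f' • x)) t := by
  have h := (hasDerivAt_exp_smul_const x (f t)).scomp t hf
  rwa [mul_smul_comm]

theorem HasDerivAt.mul_of_body_velocity {P A : 𝕜 → 𝔸} {W V Ainv : 𝔸}
    (hP : HasDerivAt P (P u * W) u) (hA : HasDerivAt A (A u * V) u) (hinv : A u * Ainv = 1) :
    HasDerivAt (fun t => P t * A t) (P u * A u * (Ainv * W * A u + V)) u := by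
  refine (hP.mul hA).congr_deriv ?_
  symm
  calc P u * A u * (Ainv * W * A u + V)
      = P u * (A u * Ainv) * W * A u + P u * (A u * V) := by noncomm_ring
    _ = P u * W * A u + P u * (A u * V) := by rw [hinv, mul_one]

theorem hasDerivAt_list_prod_range_of_body_velocity {F : ℕ → 𝕜 → 𝔸} {Finv V W : ℕ → 𝔸} {m : ℕ}
    (hF : ∀ j < m, HasDerivAt (F j) (F j u * V j) u) (hinv : ∀ j < m, F j u * Finv j = 1)
    (hW₀ : W 0 = 0) (hW : ∀ j < m, W (j + 1) = Finv j * W j * F j u + V j) :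
    HasDerivAt (fun t => ((List.range m).map (F · t)).prod)
      (((List.range m).map (F · u)).prod * W m) u := by
  induction m with
  | zero => simpa [hW₀] using hasDerivAt_const u (1 : 𝔸)
  | succ m ih =>
    have hprod := (ih (fun j hj => hF j (by omega)) (fun j hj => hinv j (by omega))
      (fun j hj => hW j (by omega))).mul_of_body_velocity (hF m (by omega)) (hinv m (by omega))
    simpa only [List.range_succ, List.map_append, List.prod_append, List.map_singleton,
      List.prod_singleton, ← hW m (by omega)] using hprod

end LeftTrivializedDerivative

/-- For the cumulative Lie group B-spline
`X(u) = X_i · Π_{j=1}^{k-1} Exp(λ_j(u) d_j)` in a matrix Lie group, with the velocity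
recursion `ω^{(1)} = 0`, `ω^{(j)} = Ad_{A_{j-1}⁻¹} ω^{(j-1)} + λ̇_{j-1} d_{j-1}`
(expressed through the hat map: `hat(Ad_{A⁻¹} w) = A⁻¹ hat(w) A`), the quantity `X(u)⁻¹ Ẋ(u)` equals `(ω^{(k)})_∧` and hence lies in the Lie algebra of `L`
(the range of the hat map). -/
theorem body_velocity_in_lie_algebra {n p : ℕ} (k : ℕ) (hk : 1 ≤ k)
    (hat : (Fin p → ℝ) →ₗ[ℝ] Matrix (Fin n) (Fin n) ℝ)
    (Xi : Matrix (Fin n) (Fin n) ℝ) (hXi : IsUnit Xi)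
    (lam : ℕ → ℝ → ℝ) (d : ℕ → Fin p → ℝ)
    (hlam : ∀ j, Differentiable ℝ (lam j))
    (A : ℕ → ℝ → Matrix (Fin n) (Fin n) ℝ)
    (hA : ∀ j u, A j u = exp (lam j u • hat (d j)))
    (X : ℝ → Matrix (Fin n) (Fin n) ℝ)
    (hX : ∀ u, X u = Xi * ((List.range (k - 1)).map (fun j => A (j + 1) u)).prod)
    (ω : ℕ → ℝ → Fin p → ℝ)
    (hω1 : ∀ u, ω 1 u = 0)
    (hωrec : ∀ j u, 2 ≤ j → j ≤ k →
      hat (ω j u) = (A (j - 1) u)⁻¹ * hat (ω (j - 1) u) * A (j - 1) u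
        + deriv (lam (j - 1)) u • hat (d (j - 1)))
    (u : ℝ) :
    (X u)⁻¹ * deriv X u = hat (ω k u) ∧ (X u)⁻¹ * deriv X u ∈ Set.range hat := by
  have hA_unit : ∀ j, IsUnit (A j u) := fun j => hA j u ▸ Matrix.isUnit_exp _
  have hA_deriv : ∀ j, HasDerivAt (A j) (A j u * (deriv (lam j) u • hat (d j))) u := by
    intro j
    rw [hA j u, funext (hA j)]
    exact ((hlam j u).hasDerivAt).exp_smul_const _
  have hP := hasDerivAt_list_prod_range_of_body_velocity (m := k - 1) (u := u)
    (F := fun j => A (j + 1)) (Finv := fun j => (A (j + 1) u)⁻¹)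
    (W := fun j => hat (ω (j + 1) u)) (fun j _ => hA_deriv (j + 1))
    (fun j _ => Matrix.mul_nonsing_inv _ ((A (j + 1) u).isUnit_iff_isUnit_det.mp (hA_unit _)))
    (by simp [hω1]) (fun j _ => hωrec (j + 2) u (by omega) (by omega))
  have hX_deriv : HasDerivAt X (X u * hat (ω k u)) u := by
    rw [hX u, funext hX, mul_assoc]
    have hXi_P := hP.const_mul Xi
    rwa [Nat.sub_add_cancel hk] at hXi_P
  have hX_unit : IsUnit (X u) := hX u ▸ hXi.mul (List.prod_isUnit (by simp [hA_unit]))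
  have hbody : (X u)⁻¹ * deriv X u = hat (ω k u) :=
    calc (X u)⁻¹ * deriv X u = (X u)⁻¹ * (X u * hat (ω k u)) := congrArg _ hX_deriv.deriv
      _ = hat (ω k u) := by
        rw [← mul_assoc, Matrix.nonsing_inv_mul _ ((X u).isUnit_iff_isUnit_det.mp hX_unit), one_mul]
  exact ⟨hbody, hbody ▸ ⟨ω k u, rfl⟩⟩
end

section
/- Let X(u) be a cumulative Lie group B-spline with velocity ω^{(k)} and acceleration ω̇^{(k)} defined by the recursions ω^{(1)} = ω̇^{(1)} = ω̈^{(1)} = 0, ω^{(j)} = Ad_{A_{j-1}^{-1}} ω^{(j-1)} + λ̇_{j-1} d_{j-1}, ω̇^{(j)} = λ̇_{j-1}[ω^{(j)}_∧, D_{j-1}]_∨ + Ad_{A_{j-1}^{-1}} ω̇^{(j-1)} + λ̈_{j-1} d_{j-1}, and ω̈^{(j)} = Ad_{A_{j-1}^{-1}} ω̈^{(j-1)} + λ⃛_{j-1} d_{j-1} + [λ̈_{j-1} ω^{(j)}_∧ + 2λ̇_{j-1} ω̇^{(j)}_∧ − λ̇²_{j-1}[ω^{(j)}_∧, D_{j-1}],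 D_{j-1}]_∨. Then the third derivative satisfies X⃛(u) = X(u)((ω^{(k)}_∧)³ + 2ω^{(k)}_∧ ω̇^{(k)}_∧ + ω̇^{(k)}_∧ ω^{(k)}_∧ + ω̈^{(k)}_∧). -/
open NormedSpace

attribute [local instance] Matrix.linftyOpNormedRing Matrix.linftyOpNormedAlgebra

/-!
By induction on the number of factors, `X_m = X_i A_1 ⋯ A_{m-1}` satisfies `X_m' = X_m ω^{(m)}_∧`,
and the recursions for `ω^{(m)}_∧`, `ω̇^{(m)}_∧` are exactly what the product rule produces: since
`D` commutes with `exp (λ D)`, differentiating the conjugate `exp (-λ D) M exp (λ D)` gives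
`λ̇ [exp (-λ D) M exp (λ D), D] + exp (-λ D) M' exp (λ D)`. Differentiating `X' = X ω_∧` twice
more then gives the formula for `X⃛`.
-/

theorem ContDiff.hasDerivAt_iteratedDeriv {𝕜 F : Type*} [NontriviallyNormedField 𝕜]
    [NormedAddCommGroup F] [NormedSpace 𝕜 F] {f : 𝕜 → F} {n : WithTop ℕ∞} (hf : ContDiff 𝕜 n f)
    {m : ℕ} (hm : m < n) (x : 𝕜) :
    HasDerivAt (iteratedDeriv m f) (iteratedDeriv (m + 1) f x) x := by
  rw [iteratedDeriv_succ]
  exact (hf.differentiable_iteratedDeriv m hm x).hasDerivAt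

section

variable {𝔸 : Type*} [NormedRing 𝔸] [NormedAlgebra ℝ 𝔸]

theorem hasDerivAt_deriv_deriv_of_hasDerivAt_mul {X W Wd Wdd : ℝ → 𝔸}
    (hX : ∀ v, HasDerivAt X (X v * W v) v)
    (hW : ∀ v, HasDerivAt W (Wd v) v) (hWd : ∀ v, HasDerivAt Wd (Wdd v) v) (u : ℝ) :
    HasDerivAt (deriv (deriv X))
      (X u * (W u ^ 3 + 2 • (W u * Wd u) + Wd u * W u + Wdd u)) u := by
  have hX' : deriv X = X * W := funext fun v => (hX v).deriv
  have hX'' : deriv (deriv X) = X * W * W + X * Wd :=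
    funext fun v => by rw [hX']; exact (((hX v).mul (hW v)).deriv)
  rw [hX'']
  refine ((((hX u).mul (hW u)).mul (hW u)).add ((hX u).mul (hWd u))).congr_deriv ?_
  simp only [Pi.mul_apply]
  noncomm_ring

noncomputable def cumulativeSpline (X₀ : 𝔸) (f : ℕ → ℝ → ℝ) (D : ℕ → 𝔸) (m : ℕ) (w : ℝ) : 𝔸 :=
  X₀ * ((List.range m).map fun j => exp (f j w • D j)).prod

theorem cumulativeSpline_zero (X₀ : 𝔸) (f : ℕ → ℝ → ℝ) (D : ℕ → 𝔸) :
    cumulativeSpline X₀ f D 0 = fun _ => X₀ := by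
  funext w
  simp [cumulativeSpline]

theorem cumulativeSpline_succ (X₀ : 𝔸) (f : ℕ → ℝ → ℝ) (D : ℕ → 𝔸) (m : ℕ) :
    cumulativeSpline X₀ f D (m + 1)
      = fun w => cumulativeSpline X₀ f D m w * exp (f m w • D m) := by
  funext w
  simp [cumulativeSpline, List.range_succ, mul_assoc]

variable [CompleteSpace 𝔸]

theorem HasDerivAt.exp_smul_const_s19 {f : ℝ → ℝ} {f' v : ℝ} (hf : HasDerivAt f f' v) (D : 𝔸) :
    HasDerivAt (fun w => NormedSpace.exp (f w • D)) (f' • (NormedSpace.exp (f v • D) * D)) v :=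
  (hasDerivAt_exp_smul_const D (f v)).scomp v hf

theorem exp_mul_exp_neg (x : 𝔸) : exp x * exp (-x) = 1 := by
  have hmem : ∀ y : 𝔸, y ∈ Metric.eball 0 (expSeries ℝ 𝔸).radius := fun y => by
    simp [expSeries_radius_eq_top]
  rw [← exp_add_of_commute_of_mem_ball (Commute.refl x).neg_right (hmem _) (hmem _),
    add_neg_cancel, exp_zero]

theorem hasDerivAt_exp_conj {f : ℝ → ℝ} {f' v : ℝ} {M : ℝ → 𝔸} {M' : 𝔸} (D : 𝔸)
    (hf : HasDerivAt f f' v) (hM : HasDerivAt M M' v) :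
    HasDerivAt (fun w => exp (-(f w • D)) * M w * exp (f w • D))
      (f' • (exp (-(f v • D)) * M v * exp (f v • D) * D
          - D * (exp (-(f v • D)) * M v * exp (f v • D)))
        + exp (-(f v • D)) * M' * exp (f v • D)) v := by
  have hE' : HasDerivAt (fun w => exp (-(f w • D))) ((-f') • (exp (-(f v • D)) * D)) v := by
    simpa only [neg_smul] using hf.fun_neg.exp_smul_const_s19 D
  have hcomm : exp (-(f v • D)) * D = D * exp (-(f v • D)) :=
    ((Commute.refl D).smul_left (f v)).neg_left.exp_left.eq
  convert (hE'.fun_mul hM).fun_mul (hf.exp_smul_const_s19 D) using 1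
  rw [hcomm]
  simp only [add_mul, smul_mul_assoc, mul_smul_comm, mul_assoc]
  module

section

variable (D : 𝔸) {f f₁ f₂ f₃ : ℝ → ℝ} {v : ℝ}

theorem hasDerivAt_velocity_succ {W V : ℝ → 𝔸} {W' : 𝔸} (hf : HasDerivAt f (f₁ v) v)
    (hf₁ : HasDerivAt f₁ (f₂ v) v) (hW : HasDerivAt W W' v)
    (hV : ∀ w, V w = exp (-(f w • D)) * W w * exp (f w • D) + f₁ w • D) :
    HasDerivAt V
      (f₁ v • (V v * D - D * V v) + exp (-(f v • D)) * W' * exp (f v • D) + f₂ v • D) v := by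
  refine (((hasDerivAt_exp_conj D hf hW).fun_add (hf₁.smul_const D)).congr_deriv ?_)
    |>.congr_of_eventuallyEq (.of_forall hV)
  rw [hV]
  simp only [add_mul, mul_add, smul_mul_assoc, mul_smul_comm]
  module

theorem hasDerivAt_acceleration_succ {V Vd Wd : ℝ → 𝔸} {Wd' : 𝔸} (hf : HasDerivAt f (f₁ v) v)
    (hf₁ : HasDerivAt f₁ (f₂ v) v) (hf₂ : HasDerivAt f₂ (f₃ v) v) (hV : HasDerivAt V (Vd v) v)
    (hWd : HasDerivAt Wd Wd' v)
    (hVd : ∀ w, Vd w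
      = f₁ w • (V w * D - D * V w) + exp (-(f w • D)) * Wd w * exp (f w • D) + f₂ w • D) :
    HasDerivAt Vd (exp (-(f v • D)) * Wd' * exp (f v • D) + f₃ v • D
      + ((f₂ v • V v + (2 * f₁ v) • Vd v - f₁ v ^ 2 • (V v * D - D * V v)) * D
        - D * (f₂ v • V v + (2 * f₁ v) • Vd v - f₁ v ^ 2 • (V v * D - D * V v)))) v := by
  have hV_comm : HasDerivAt (fun w => V w * D - D * V w) (Vd v * D - D * Vd v) v :=
    (hV.mul_const D).fun_sub (hV.const_mul D)
  have hconj : exp (-(f v • D)) * Wd v * exp (f v • D)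
      = Vd v - f₁ v • (V v * D - D * V v) - f₂ v • D := by
    rw [hVd]; abel
  refine ((((hf₁.fun_smul hV_comm).fun_add (hasDerivAt_exp_conj D hf hWd)).fun_add
    (hf₂.smul_const D)).congr_deriv ?_).congr_of_eventuallyEq (.of_forall hVd)
  rw [hconj]
  simp only [add_mul, mul_add, sub_mul, mul_sub, smul_mul_assoc, mul_smul_comm, mul_assoc]
  module

theorem hasDerivAt_mul_exp_smul {f' : ℝ} {P W : ℝ → 𝔸} (hf : HasDerivAt f f' v)
    (hP : HasDerivAt P (P v * W v) v) :
    HasDerivAt (fun w => P w * exp (f w • D))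
      (P v * exp (f v • D) * (exp (-(f v • D)) * W v * exp (f v • D) + f' • D)) v := by
  have hcancel : P v * exp (f v • D) * exp (-(f v • D)) = P v := by
    rw [mul_assoc, exp_mul_exp_neg, mul_one]
  convert hP.fun_mul (hf.exp_smul_const_s19 D) using 1
  simp only [mul_add, ← mul_assoc, hcancel, mul_smul_comm]

end

-- `W m` is `ω^{(m+1)}_∧`: the levels are shifted so that the recursion starts at `0`.
theorem cumulativeSpline_hasDerivAt {f : ℕ → ℝ → ℝ} (hf : ∀ j, ContDiff ℝ 3 (f j)) (D : ℕ → 𝔸)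
    (X₀ : 𝔸) {W Wd Wdd : ℕ → ℝ → 𝔸} {K : ℕ}
    (hW₀ : ∀ w, W 0 w = 0) (hWd₀ : ∀ w, Wd 0 w = 0) (hWdd₀ : ∀ w, Wdd 0 w = 0)
    (hW : ∀ j < K, ∀ w, W (j + 1) w
      = exp (-(f j w • D j)) * W j w * exp (f j w • D j) + deriv (f j) w • D j)
    (hWd : ∀ j < K, ∀ w, Wd (j + 1) w
      = deriv (f j) w • (W (j + 1) w * D j - D j * W (j + 1) w)
        + exp (-(f j w • D j)) * Wd j w * exp (f j w • D j) + deriv (deriv (f j)) w • D j)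
    (hWdd : ∀ j < K, ∀ w, Wdd (j + 1) w
      = exp (-(f j w • D j)) * Wdd j w * exp (f j w • D j) + deriv (deriv (deriv (f j))) w • D j
        + ((deriv (deriv (f j)) w • W (j + 1) w + (2 * deriv (f j) w) • Wd (j + 1) w
            - deriv (f j) w ^ 2 • (W (j + 1) w * D j - D j * W (j + 1) w)) * D j
          - D j * (deriv (deriv (f j)) w • W (j + 1) w + (2 * deriv (f j) w) • Wd (j + 1) w
            - deriv (f j) w ^ 2 • (W (j + 1) w * D j - D j * W (j + 1) w)))) :
    ∀ m ≤ K, (∀ v, HasDerivAt (W m) (Wd m v) v) ∧ (∀ v, HasDerivAt (Wd m) (Wdd m v) v) ∧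
      ∀ v, HasDerivAt (cumulativeSpline X₀ f D m) (cumulativeSpline X₀ f D m v * W m v) v := by
  have hf₀ (j) (v) := (hf j).hasDerivAt_iteratedDeriv (m := 0) (by norm_num) v
  have hf₁ (j) (v) := (hf j).hasDerivAt_iteratedDeriv (m := 1) (by norm_num) v
  have hf₂ (j) (v) := (hf j).hasDerivAt_iteratedDeriv (m := 2) (by norm_num) v
  simp only [iteratedDeriv_succ, iteratedDeriv_zero] at hf₀ hf₁ hf₂
  intro m hm
  induction m with
  | zero =>
    simp only [funext hW₀, funext hWd₀, funext hWdd₀, mul_zero]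
    exact ⟨fun v => hasDerivAt_const v 0, fun v => hasDerivAt_const v 0,
      fun v => cumulativeSpline_zero X₀ f D ▸ hasDerivAt_const v X₀⟩
  | succ m ih =>
    obtain ⟨ihW, ihWd, ihX⟩ := ih (by omega)
    have hW' (v) : HasDerivAt (W (m + 1)) (Wd (m + 1) v) v := by
      rw [hWd m hm v]
      exact hasDerivAt_velocity_succ (D m) (hf₀ m v) (hf₁ m v) (ihW v) (hW m hm)
    refine ⟨hW', fun v => ?_, fun v => ?_⟩
    · rw [hWdd m hm v]
      exact hasDerivAt_acceleration_succ (D m) (hf₀ m v) (hf₁ m v) (hf₂ m v) (hW' v) (ihWd v)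
        (hWd m hm)
    · rw [cumulativeSpline_succ, hW m hm v]
      exact hasDerivAt_mul_exp_smul (D m) (hf₀ m v) (ihX v)

end

/-- For the cumulative Lie group B-spline
`X(u) = X_i Π_{j=1}^{k-1} Exp(λ_j(u) d_j)` with velocity `ω^{(k)}`, acceleration `ω̇^{(k)}`
and jerk `ω̈^{(k)}` defined by the recursions (expressed through the hat map, with
`⟦P,Q⟧ = PQ − QP` the matrix commutator):
`ω^{(1)} = ω̇^{(1)} = ω̈^{(1)} = 0`,
`ω^{(j)} = Ad_{A_{j-1}⁻¹} ω^{(j-1)} + λ̇_{j-1} d_{j-1}`,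
`ω̇^{(j)} = λ̇_{j-1}⟦ω^{(j)}_∧, D_{j-1}⟧_∨ + Ad_{A_{j-1}⁻¹} ω̇^{(j-1)} + λ̈_{j-1} d_{j-1}`,
`ω̈^{(j)} = Ad_{A_{j-1}⁻¹} ω̈^{(j-1)} + λ⃛_{j-1} d_{j-1}
  + ⟦λ̈_{j-1} ω^{(j)}_∧ + 2λ̇_{j-1} ω̇^{(j)}_∧ − λ̇²_{j-1}⟦ω^{(j)}_∧, D_{j-1}⟧, D_{j-1}⟧_∨`,
the third derivative satisfies
`X⃛(u) = X(u)((ω^{(k)}_∧)³ + 2ω^{(k)}_∧ ω̇^{(k)}_∧ + ω̇^{(k)}_∧ ω^{(k)}_∧ + ω̈^{(k)}_∧)`. -/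
theorem cumulative_spline_third_deriv {n p : ℕ} (k : ℕ) (hk : 1 ≤ k)
    (hat : (Fin p → ℝ) →ₗ[ℝ] Matrix (Fin n) (Fin n) ℝ)
    (Xi : Matrix (Fin n) (Fin n) ℝ)
    (lam : ℕ → ℝ → ℝ) (d : ℕ → Fin p → ℝ)
    (hlam : ∀ j, ContDiff ℝ 3 (lam j))
    (A : ℕ → ℝ → Matrix (Fin n) (Fin n) ℝ)
    (hA : ∀ j u, A j u = exp (lam j u • hat (d j)))
    (X : ℝ → Matrix (Fin n) (Fin n) ℝ)
    (hX : ∀ u, X u = Xi * ((List.range (k - 1)).map (fun j => A (j + 1) u)).prod)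
    (ω ωd ωdd : ℕ → ℝ → Fin p → ℝ)
    (hω1 : ∀ u, ω 1 u = 0) (hωd1 : ∀ u, ωd 1 u = 0) (hωdd1 : ∀ u, ωdd 1 u = 0)
    (hωrec : ∀ j u, 2 ≤ j → j ≤ k →
      hat (ω j u) = (A (j - 1) u)⁻¹ * hat (ω (j - 1) u) * A (j - 1) u
        + deriv (lam (j - 1)) u • hat (d (j - 1)))
    (hωdrec : ∀ j u, 2 ≤ j → j ≤ k →
      hat (ωd j u)
        = deriv (lam (j - 1)) u •
            (hat (ω j u) * hat (d (j - 1)) - hat (d (j - 1)) * hat (ω j u))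
          + (A (j - 1) u)⁻¹ * hat (ωd (j - 1) u) * A (j - 1) u
          + deriv (deriv (lam (j - 1))) u • hat (d (j - 1)))
    (hωddrec : ∀ j u, 2 ≤ j → j ≤ k →
      hat (ωdd j u)
        = (A (j - 1) u)⁻¹ * hat (ωdd (j - 1) u) * A (j - 1) u
          + deriv (deriv (deriv (lam (j - 1)))) u • hat (d (j - 1))
          + ((deriv (deriv (lam (j - 1))) u • hat (ω j u)
              + (2 * deriv (lam (j - 1)) u) • hat (ωd j u)
              - (deriv (lam (j - 1)) u ^ 2) •
                  (hat (ω j u) * hat (d (j - 1)) - hat (d (j - 1)) * hat (ω j u)))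
                * hat (d (j - 1))
            - hat (d (j - 1)) *
                (deriv (deriv (lam (j - 1))) u • hat (ω j u)
                  + (2 * deriv (lam (j - 1)) u) • hat (ωd j u)
                  - (deriv (lam (j - 1)) u ^ 2) •
                      (hat (ω j u) * hat (d (j - 1)) - hat (d (j - 1)) * hat (ω j u)))))
    (u : ℝ) :
    HasDerivAt (deriv (deriv X))
      (X u * (hat (ω k u) ^ 3 + 2 • (hat (ω k u) * hat (ωd k u))
        + hat (ωd k u) * hat (ω k u) + hat (ωdd k u))) u := by
  have hX' : X = cumulativeSpline Xi (fun j => lam (j + 1)) (fun j => hat (d (j + 1))) (k - 1) := by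
    funext u
    simp only [hX, hA]
    -- the two sides differ only in the (defeq) topology on matrices that `exp` is taken in
    rfl
  subst hX'
  simp only [hA, ← Matrix.exp_neg] at hωrec hωdrec hωddrec
  obtain ⟨hW, hWd, hXd⟩ := cumulativeSpline_hasDerivAt (fun j => hlam (j + 1))
    (fun j => hat (d (j + 1))) Xi (W := fun j w => hat (ω (j + 1) w))
    (Wd := fun j w => hat (ωd (j + 1) w)) (Wdd := fun j w => hat (ωdd (j + 1) w))
    (by simp [hω1]) (by simp [hωd1]) (by simp [hωdd1])
    (fun j hj w => hωrec (j + 2) w (by omega) (by omega))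
    (fun j hj w => hωdrec (j + 2) w (by omega) (by omega))
    (fun j hj w => hωddrec (j + 2) w (by omega) (by omega))
    (k - 1) le_rfl
  rw [Nat.sub_add_cancel hk] at hW hWd hXd
  exact hasDerivAt_deriv_deriv_of_hasDerivAt_mul hXd hW hWd u
end
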